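/- Let (L, R) be a Reynolds Lie algebra over a field k and (V; ρ, R_V) a representation of it. For every n ≥ 1 and every alternating n-multilinear map f : Λⁿ L → V, one has δ_R(φ f) = φ(δ_CE f), where δ_CE is the Chevalley–Eilenberg coboundary of (L,[·,·]) with coefficients in (V,ρ), δ_R is the Chevalley–Eilenberg coboundary of (L,[·,·]_R) with coefficients in (V,ρ_R), and φ is the map (φ f)(x_1,…,x_n) = f(R x_1,…,R x_n) − R_V(Σ_{i=1}^n f(R x_1,…,x_i,…,R x_n)) + (n−1) R_V f(R x_1,…,R x_n). -/
import Mathlib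


namespace ReynoldsCohomology

variable {k L V : Type*} [Field k] [LieRing L] [LieAlgebra k L]
  [AddCommGroup V] [Module k V]

/-- Chevalley–Eilenberg-type coboundary operator determined by an action-like map `rh`
and a bracket-like map `br`, acting on plain `m`-cochains `(Fin m → L) → V`:
`(δ f)(x₁,…,x_{m+1}) = Σᵢ (-1)^{i+m} rh(xᵢ) f(x₁,…,x̂ᵢ,…,x_{m+1})
  + Σ_{i<j} (-1)^{i+j+m+1} f(br(xᵢ,xⱼ), x₁,…,x̂ᵢ,…,x̂ⱼ,…,x_{m+1})`
(1-indexed, as in the paper; here the indices are 0-based). -/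
def cobound (rh : L → V → V) (br : L → L → L) :
    (m : ℕ) → ((Fin m → L) → V) → (Fin (m + 1) → L) → V
  | 0, f, x => - rh (x 0) (f fun j => j.elim0)
  | n + 1, f, x =>
      (∑ i : Fin (n + 2), ((-1 : ℤ) ^ ((i : ℕ) + n)) • rh (x i) (f fun l => x (i.succAbove l)))
        + ∑ i : Fin (n + 2), ∑ j : Fin (n + 1),
            if (i : ℕ) ≤ (j : ℕ) then
              ((-1 : ℤ) ^ ((i : ℕ) + (j : ℕ) + n + 1)) •
                f (Fin.cons (br (x i) (x (i.succAbove j)))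
                    fun l : Fin n => x (i.succAbove (j.succAbove l)))
            else 0

/-- The map `φ` from Chevalley–Eilenberg cochains to cochains of the Reynolds operator:
`(φ f)(x₁,…,x_m) = f(R x₁,…,R x_m) - R_V (Σᵢ f(R x₁,…,xᵢ,…,R x_m))
  + (m-1) R_V f(R x₁,…,R x_m)` for `m ≥ 1`, and `φ = id` for `m = 0`. -/
def phimap (Rm : L → L) (RV : V → V) :
    (m : ℕ) → ((Fin m → L) → V) → (Fin m → L) → V
  | 0, f => f
  | n + 1, f => fun x =>
      f (fun i => Rm (x i))
        - RV (∑ i : Fin (n + 1), f fun j => if j = i then x j else Rm (x j))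
        + n • RV (f fun i => Rm (x i))

/-- The operator `Δ` induced by a pair of derivations:
`(Δ f)(x₁,…,x_m) = Σᵢ f(x₁,…,d xᵢ,…,x_m) - d_V (f(x₁,…,x_m))`. -/
def deltamap (dm : L → L) (dV : V → V) {m : ℕ} (f : (Fin m → L) → V) :
    (Fin m → L) → V :=
  fun x => (∑ i : Fin m, f (Function.update x i (dm (x i)))) - dV (f x)

/-- The bracket `[x, y]_R := [x, R y] + [R x, y] - [R x, R y]` induced by a Reynolds
operator. -/
def brR (R : L →ₗ[k] L) (x y : L) : L := ⁅x, R y⁆ + ⁅R x, y⁆ - ⁅R x, R y⁆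

/-- The induced action `ρ_R(x)u := ρ(R x)u + R_V(ρ(R x)u - ρ(x)u)`. -/
def rhoR (R : L →ₗ[k] L) (ρ : L →ₗ[k] Module.End k V) (RV : V →ₗ[k] V)
    (x : L) (v : V) : V :=
  ρ (R x) v + RV (ρ (R x) v - ρ x v)


section Aux

variable (R : L →ₗ[k] L) (ρ : L →ₗ[k] Module.End k V) (RV : V →ₗ[k] V)

lemma key1
    (hRV : ∀ (x : L) (u : V),
      ρ (R x) (RV u) = RV (ρ (R x) u + ρ x (RV u) - ρ (R x) (RV u)))
    (z : L) (P u : V) (n : ℕ) :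
    rhoR R ρ RV z (P - RV u + n • RV P)
      = ρ (R z) P + RV ((n + 1) • ρ (R z) P - ρ z P - ρ (R z) u) := by
  have hw : ∀ g : Module.End k V, g (P - RV u + n • RV P)
      = g P - g (RV u) + n • g (RV P) := by
    intro g; simp [map_sub, map_add, map_nsmul]
  show ρ (R z) (P - RV u + n • RV P)
      + RV (ρ (R z) (P - RV u + n • RV P) - ρ z (P - RV u + n • RV P)) = _
  rw [hw, hw]
  conv_lhs => enter [1]; rw [hRV z u, hRV z P]
  simp only [map_add, map_sub, map_nsmul, smul_add, smul_sub, succ_nsmul]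
  abel

lemma R_brR (hR : ∀ x y : L, ⁅R x, R y⁆ = R (⁅R x, y⁆ + ⁅x, R y⁆ - ⁅R x, R y⁆))
    (u v : L) : R (brR R u v) = ⁅R u, R v⁆ := by
  rw [brR, show ⁅u, R v⁆ + ⁅R u, v⁆ = ⁅R u, v⁆ + ⁅u, R v⁆ from add_comm _ _, ← hR]

lemma cons_add_sub {n : ℕ} (f : AlternatingMap k L V (Fin (n + 1))) (a b c : L)
    (t : Fin n → L) :
    f (Fin.cons (a + b - c) t) = f (Fin.cons a t) + f (Fin.cons b t) - f (Fin.cons c t) := by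
  have h : ∀ z : L, (Fin.cons z t : Fin (n + 1) → L)
      = Function.update (Fin.cons c t : Fin (n + 1) → L) 0 z :=
    fun z => (Fin.update_cons_zero (α := fun _ => L) c t z).symm
  rw [h (a + b - c), h a, h b, f.map_update_sub, f.map_update_add]
  simp only [Fin.update_cons_zero]

lemma phimap_cons_brR {n : ℕ}
    (hR : ∀ x y : L, ⁅R x, R y⁆ = R (⁅R x, y⁆ + ⁅x, R y⁆ - ⁅R x, R y⁆))
    (f : AlternatingMap k L V (Fin (n + 1))) (u v : L) (t : Fin n → L) :
    phimap (fun y => R y) (fun w => RV w) (n + 1) ⇑f (Fin.cons (brR R u v) t)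
      = f (Fin.cons ⁅R u, R v⁆ fun l => R (t l))
        + RV ((n + 1) • f (Fin.cons ⁅R u, R v⁆ fun l => R (t l))
            - f (Fin.cons ⁅u, R v⁆ fun l => R (t l))
            - f (Fin.cons ⁅R u, v⁆ fun l => R (t l))
            - ∑ c : Fin n, f (Fin.cons ⁅R u, R v⁆
                fun l => if l = c then t l else R (t l))) := by
  have hb : R (brR R u v) = ⁅R u, R v⁆ := R_brR R hR u v
  have h1 : (fun i => R ((Fin.cons (brR R u v) t : Fin (n+1) → L) i))
      = Fin.cons ⁅R u, R v⁆ (fun l => R (t l)) := by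
    funext i
    refine Fin.cases ?_ ?_ i
    · simp [hb]
    · intro l; simp
  have h2 : (fun j => if j = (0 : Fin (n+1)) then (Fin.cons (brR R u v) t : Fin (n+1) → L) j
        else R ((Fin.cons (brR R u v) t : Fin (n+1) → L) j))
      = Fin.cons (brR R u v) (fun l => R (t l)) := by
    funext j
    refine Fin.cases ?_ ?_ j
    · simp
    · intro l; simp [Fin.succ_ne_zero]
  have h3 : ∀ c : Fin n, (fun j => if j = Fin.succ c then (Fin.cons (brR R u v) t : Fin (n+1) → L) j
        else R ((Fin.cons (brR R u v) t : Fin (n+1) → L) j))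
      = Fin.cons ⁅R u, R v⁆ (fun l => if l = c then t l else R (t l)) := by
    intro c
    funext j
    refine Fin.cases ?_ ?_ j
    · simp [(Fin.succ_ne_zero c).symm, hb]
    · intro l
      by_cases hlc : l = c
      · simp [hlc]
      · simp [hlc, fun h => hlc (Fin.succ_inj.mp h)]
  have hsplit : f (Fin.cons (brR R u v) (fun l => R (t l)))
      = f (Fin.cons ⁅u, R v⁆ fun l => R (t l)) + f (Fin.cons ⁅R u, v⁆ fun l => R (t l))
        - f (Fin.cons ⁅R u, R v⁆ fun l => R (t l)) := by
    rw [brR]; exact cons_add_sub f _ _ _ _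
  simp only [phimap, h1, Fin.sum_univ_succ, h2, h3, hsplit]
  simp only [map_add, map_sub, map_sum, map_nsmul, succ_nsmul]
  abel

variable {n : ℕ} (f : AlternatingMap k L V (Fin (n + 1))) (x : Fin (n + 2) → L)

/-- The common normal form of both sides. -/
def NN : V :=
  (∑ i : Fin (n + 2), ((-1 : ℤ) ^ ((i : ℕ) + n)) •
      ρ (R (x i)) (f fun l => R (x (i.succAbove l))))
  + (∑ i : Fin (n + 2), ∑ j : Fin (n + 1),
      if (i : ℕ) ≤ (j : ℕ) then
        ((-1 : ℤ) ^ ((i : ℕ) + (j : ℕ) + n + 1)) •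
          f (Fin.cons ⁅R (x i), R (x (i.succAbove j))⁆
              fun l => R (x (i.succAbove (j.succAbove l))))
      else 0)
  + RV (
      (∑ i : Fin (n + 2), ((-1 : ℤ) ^ ((i : ℕ) + n)) •
        ((n + 1) • ρ (R (x i)) (f fun l => R (x (i.succAbove l)))
          - ρ (x i) (f fun l => R (x (i.succAbove l)))
          - ρ (R (x i))
              (∑ a : Fin (n + 1),
                f fun l => if l = a then x (i.succAbove l) else R (x (i.succAbove l)))))
      + ∑ i : Fin (n + 2), ∑ j : Fin (n + 1),
          if (i : ℕ) ≤ (j : ℕ) then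
            ((-1 : ℤ) ^ ((i : ℕ) + (j : ℕ) + n + 1)) •
              ((n + 1) • f (Fin.cons ⁅R (x i), R (x (i.succAbove j))⁆
                  fun l => R (x (i.succAbove (j.succAbove l))))
               - f (Fin.cons ⁅x i, R (x (i.succAbove j))⁆
                  fun l => R (x (i.succAbove (j.succAbove l))))
               - f (Fin.cons ⁅R (x i), x (i.succAbove j)⁆
                  fun l => R (x (i.succAbove (j.succAbove l))))
               - ∑ c : Fin n, f (Fin.cons ⁅R (x i), R (x (i.succAbove j))⁆
                  fun l => if l = c then x (i.succAbove (j.succAbove l))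
                           else R (x (i.succAbove (j.succAbove l)))))
          else 0)

set_option maxHeartbeats 2000000 in
lemma lhs_eq
    (hR : ∀ x y : L, ⁅R x, R y⁆ = R (⁅R x, y⁆ + ⁅x, R y⁆ - ⁅R x, R y⁆))
    (hRV : ∀ (x : L) (u : V),
      ρ (R x) (RV u) = RV (ρ (R x) u + ρ x (RV u) - ρ (R x) (RV u))) :
    cobound (rhoR R ρ RV) (brR R) (n + 1)
        (phimap (fun x => R x) (fun v => RV v) (n + 1) ⇑f) x
      = NN R ρ RV f x := by
  have hterm : ∀ i : Fin (n + 2),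
      rhoR R ρ RV (x i)
        (phimap (fun y => R y) (fun w => RV w) (n + 1) ⇑f fun l => x (i.succAbove l))
      = ρ (R (x i)) (f fun l => R (x (i.succAbove l)))
        + RV ((n + 1) • ρ (R (x i)) (f fun l => R (x (i.succAbove l)))
            - ρ (x i) (f fun l => R (x (i.succAbove l)))
            - ρ (R (x i))
                (∑ a : Fin (n + 1),
                  f fun l => if l = a then x (i.succAbove l) else R (x (i.succAbove l)))) := by
    intro i
    simp only [phimap]
    rw [key1 R ρ RV hRV]
  have e1 : ∀ (e : ℤ) (A w : V), e • (A + RV w) = e • A + RV (e • w) := by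
    intro e A w; rw [smul_add, map_zsmul]
  have e2 : ∀ (c : Prop) (inst : Decidable c) (A w : V),
      (if c then A + RV w else 0) = (if c then A else 0) + RV (if c then w else 0) := by
    intro c inst A w; split <;> simp
  simp only [cobound]
  simp only [hterm, phimap_cons_brR R RV hR f]
  simp only [e1, e2]
  simp only [Finset.sum_add_distrib, ← map_sum]
  rw [NN, map_add, add_add_add_comm]

set_option maxHeartbeats 1000000 in
lemma rhs_eq :
    phimap (fun x => R x) (fun v => RV v) (n + 2)
        (cobound (fun x v => ρ x v) (fun x y => ⁅x, y⁆) (n + 1) ⇑f) x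
      = (cobound (fun x v => ρ x v) (fun x y => ⁅x, y⁆) (n + 1) ⇑f fun i => R (x i))
        - RV (∑ a : Fin (n + 2),
            cobound (fun x v => ρ x v) (fun x y => ⁅x, y⁆) (n + 1) ⇑f
              fun j => if j = a then x j else R (x j))
        + (n + 1) • RV (cobound (fun x v => ρ x v) (fun x y => ⁅x, y⁆) (n + 1) ⇑f
            fun i => R (x i)) := rfl

set_option maxHeartbeats 1000000 in
lemma head_eq :
    (cobound (fun x v => ρ x v) (fun x y => ⁅x, y⁆) (n + 1) ⇑f fun i => R (x i))
      = (∑ i : Fin (n + 2), ((-1 : ℤ) ^ ((i : ℕ) + n)) •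
            ρ (R (x i)) (f fun l => R (x (i.succAbove l))))
        + ∑ i : Fin (n + 2), ∑ j : Fin (n + 1),
            if (i : ℕ) ≤ (j : ℕ) then
              ((-1 : ℤ) ^ ((i : ℕ) + (j : ℕ) + n + 1)) •
                f (Fin.cons ⁅R (x i), R (x (i.succAbove j))⁆
                    fun l => R (x (i.succAbove (j.succAbove l))))
            else 0 := rfl

set_option maxHeartbeats 2000000 in
lemma sum_raw :
    (∑ a : Fin (n + 2),
        cobound (fun x v => ρ x v) (fun x y => ⁅x, y⁆) (n + 1) ⇑f
          fun j => if j = a then x j else R (x j))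
      = (∑ i : Fin (n + 2), ((-1 : ℤ) ^ ((i : ℕ) + n)) •
            (ρ (x i) (f fun l => R (x (i.succAbove l)))
              + ρ (R (x i)) (∑ a : Fin (n + 1),
                  f fun l => if l = a then x (i.succAbove l) else R (x (i.succAbove l)))))
        + ∑ i : Fin (n + 2), ∑ j : Fin (n + 1),
            if (i : ℕ) ≤ (j : ℕ) then
              ((-1 : ℤ) ^ ((i : ℕ) + (j : ℕ) + n + 1)) •
                (f (Fin.cons ⁅x i, R (x (i.succAbove j))⁆
                      fun l => R (x (i.succAbove (j.succAbove l))))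
                  + f (Fin.cons ⁅R (x i), x (i.succAbove j)⁆
                      fun l => R (x (i.succAbove (j.succAbove l))))
                  + ∑ c : Fin n, f (Fin.cons ⁅R (x i), R (x (i.succAbove j))⁆
                      fun l => if l = c then x (i.succAbove (j.succAbove l))
                               else R (x (i.succAbove (j.succAbove l)))))
            else 0 := by
  simp only [cobound]
  rw [Finset.sum_add_distrib]
  congr 1
  · rw [Finset.sum_comm]
    refine Finset.sum_congr rfl fun i _ => ?_
    rw [Fin.sum_univ_succAbove _ i]
    have hA : (fun l => if i.succAbove l = i then x (i.succAbove l)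
          else R (x (i.succAbove l))) = fun l => R (x (i.succAbove l)) :=
      funext fun l => if_neg (Fin.succAbove_ne i l)
    have hB : ∀ a' : Fin (n + 1), (fun l => if i.succAbove l = i.succAbove a'
          then x (i.succAbove l) else R (x (i.succAbove l)))
        = fun l => if l = a' then x (i.succAbove l) else R (x (i.succAbove l)) :=
      fun a' => funext fun l => by simp only [Fin.succAbove_right_inj]
    simp only [hA, hB, if_pos rfl, Fin.ne_succAbove, if_false, if_true, eq_self_iff_true,
      ite_false, ite_true, if_neg (fun h => Fin.ne_succAbove i _ h)]
    rw [smul_add, map_sum, Finset.smul_sum]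
  · rw [Finset.sum_comm]
    refine Finset.sum_congr rfl fun i _ => ?_
    rw [Finset.sum_comm]
    refine Finset.sum_congr rfl fun j _ => ?_
    by_cases hij : (i : ℕ) ≤ (j : ℕ)
    · simp only [if_pos hij]
      rw [Fin.sum_univ_succAbove _ i, Fin.sum_univ_succAbove _ j]
      simp only [Fin.succAbove_right_inj, Fin.succAbove_ne, Fin.ne_succAbove,
        if_pos rfl, ite_true, ite_false, eq_self_iff_true, if_false, if_true]
      rw [smul_add, smul_add, Finset.smul_sum]
      abel
    · simp only [if_neg hij, Finset.sum_const_zero]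



lemma smul_asm2 (m : ℕ) (e : ℤ) (X Y Z : V) :
    m • (e • X) - e • (Y + Z) = e • (m • X - Y - Z) := by
  rw [smul_comm, ← smul_sub, sub_add_eq_sub_sub]

lemma smul_asm3 (m : ℕ) (e : ℤ) (X Y Z W : V) :
    m • (e • X) - e • (Y + Z + W) = e • (m • X - Y - Z - W) := by
  rw [smul_comm, ← smul_sub, sub_add_eq_sub_sub, sub_add_eq_sub_sub]

set_option maxHeartbeats 1000000 in
lemma rhs_total :
    phimap (fun x => R x) (fun v => RV v) (n + 2)
        (cobound (fun x v => ρ x v) (fun x y => ⁅x, y⁆) (n + 1) ⇑f) x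
      = NN R ρ RV f x := by
  rw [rhs_eq R ρ RV f x, head_eq, sum_raw, NN]
  have k1 : (n + 1) • (∑ i : Fin (n + 2), ((-1 : ℤ) ^ ((i : ℕ) + n)) •
          ρ (R (x i)) (f fun l => R (x (i.succAbove l))))
        - (∑ i : Fin (n + 2), ((-1 : ℤ) ^ ((i : ℕ) + n)) •
            (ρ (x i) (f fun l => R (x (i.succAbove l)))
              + ρ (R (x i)) (∑ a : Fin (n + 1),
                  f fun l => if l = a then x (i.succAbove l) else R (x (i.succAbove l)))))
      = ∑ i : Fin (n + 2), ((-1 : ℤ) ^ ((i : ℕ) + n)) •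
          ((n + 1) • ρ (R (x i)) (f fun l => R (x (i.succAbove l)))
            - ρ (x i) (f fun l => R (x (i.succAbove l)))
            - ρ (R (x i)) (∑ a : Fin (n + 1),
                f fun l => if l = a then x (i.succAbove l) else R (x (i.succAbove l)))) := by
    rw [Finset.smul_sum, ← Finset.sum_sub_distrib]
    refine Finset.sum_congr rfl fun i _ => ?_
    exact smul_asm2 _ _ _ _ _
  have k2 : (n + 1) • (∑ i : Fin (n + 2), ∑ j : Fin (n + 1),
          if (i : ℕ) ≤ (j : ℕ) then
            ((-1 : ℤ) ^ ((i : ℕ) + (j : ℕ) + n + 1)) •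
              f (Fin.cons ⁅R (x i), R (x (i.succAbove j))⁆
                  fun l => R (x (i.succAbove (j.succAbove l))))
          else 0)
        - (∑ i : Fin (n + 2), ∑ j : Fin (n + 1),
            if (i : ℕ) ≤ (j : ℕ) then
              ((-1 : ℤ) ^ ((i : ℕ) + (j : ℕ) + n + 1)) •
                (f (Fin.cons ⁅x i, R (x (i.succAbove j))⁆
                      fun l => R (x (i.succAbove (j.succAbove l))))
                  + f (Fin.cons ⁅R (x i), x (i.succAbove j)⁆
                      fun l => R (x (i.succAbove (j.succAbove l))))
                  + ∑ c : Fin n, f (Fin.cons ⁅R (x i), R (x (i.succAbove j))⁆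
                      fun l => if l = c then x (i.succAbove (j.succAbove l))
                               else R (x (i.succAbove (j.succAbove l)))))
            else 0)
      = ∑ i : Fin (n + 2), ∑ j : Fin (n + 1),
          if (i : ℕ) ≤ (j : ℕ) then
            ((-1 : ℤ) ^ ((i : ℕ) + (j : ℕ) + n + 1)) •
              ((n + 1) • f (Fin.cons ⁅R (x i), R (x (i.succAbove j))⁆
                  fun l => R (x (i.succAbove (j.succAbove l))))
               - f (Fin.cons ⁅x i, R (x (i.succAbove j))⁆
                  fun l => R (x (i.succAbove (j.succAbove l))))
               - f (Fin.cons ⁅R (x i), x (i.succAbove j)⁆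
                  fun l => R (x (i.succAbove (j.succAbove l))))
               - ∑ c : Fin n, f (Fin.cons ⁅R (x i), R (x (i.succAbove j))⁆
                  fun l => if l = c then x (i.succAbove (j.succAbove l))
                           else R (x (i.succAbove (j.succAbove l)))))
          else 0 := by
    rw [Finset.smul_sum, ← Finset.sum_sub_distrib]
    refine Finset.sum_congr rfl fun i _ => ?_
    rw [Finset.smul_sum, ← Finset.sum_sub_distrib]
    refine Finset.sum_congr rfl fun j _ => ?_
    by_cases hij : (i : ℕ) ≤ (j : ℕ)
    · simp only [if_pos hij]
      exact smul_asm3 _ _ _ _ _ _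
    · simp only [if_neg hij, smul_zero, sub_zero]
  have hmain : ∀ (H BB : V), H - RV BB + (n + 1) • RV H = H + RV ((n + 1) • H - BB) := by
    intro H BB
    rw [map_sub, map_nsmul]
    abel
  rw [hmain]
  congr 1
  rw [smul_add, ← k1, ← k2, add_sub_add_comm]

end Aux

/-- For a Reynolds Lie algebra `(L, R)` with representation `(V; ρ, R_V)`, the maps `φ`
form a morphism of cochain complexes: `δ_R ∘ φ = φ ∘ δ_CE` on alternating `n`-cochains
(`n ≥ 1`; here the cochain degree is `n + 1`). -/
theorem phi_cochain_morphism
    (R : L →ₗ[k] L)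
    (hR : ∀ x y : L, ⁅R x, R y⁆ = R (⁅R x, y⁆ + ⁅x, R y⁆ - ⁅R x, R y⁆))
    (ρ : L →ₗ[k] Module.End k V)
    (hρ : ∀ (x y : L) (v : V), ρ ⁅x, y⁆ v = ρ x (ρ y v) - ρ y (ρ x v))
    (RV : V →ₗ[k] V)
    (hRV : ∀ (x : L) (u : V),
      ρ (R x) (RV u) = RV (ρ (R x) u + ρ x (RV u) - ρ (R x) (RV u))) :
    ∀ (n : ℕ) (f : AlternatingMap k L V (Fin (n + 1))),
      cobound (rhoR R ρ RV) (brR R) (n + 1)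
          (phimap (fun x => R x) (fun v => RV v) (n + 1) ⇑f)
        = phimap (fun x => R x) (fun v => RV v) (n + 2)
            (cobound (fun x v => ρ x v) (fun x y => ⁅x, y⁆) (n + 1) ⇑f) := by
  intro n f
  funext x
  rw [lhs_eq R ρ RV f x hR hRV, rhs_total R ρ RV f x]

end ReynoldsCohomology
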